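/- arXiv:2405.03173 — 2 statements merged into one kernel-verified Lean document; each statement's English description precedes it below -/
import Mathlib

section
/- Define H_k by H₁(r) = −2r, H₂(r) = 4r² − 2, H_{k+1}(r) = −2r H_k(r) − H_{k−1}(r). For any integer p ≥ 1 and any r ∈ [−1, 1], |(−1)^p + Σ_{k=1}^{p} (−1)^{p−k} H_k(r)| ≤ 2p + 1, with equality when r = 1. -/
/-- The polynomial sequence `H_k` from the GM-QAOA analysis:
`H₁(r) = −2r`, `H₂(r) = 4r² − 2`, `H_{k+1}(r) = −2r·H_k(r) − H_{k−1}(r)`. -/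
noncomputable def H : ℕ → ℝ → ℝ
  | 0, _ => 2
  | 1, r => -2 * r
  | (k + 2), r => -2 * r * H (k + 1) r - H k r

open Polynomial.Chebyshev in
lemma H_eq (k : ℕ) (r : ℝ) : H k r = 2 * (T ℝ k).eval (-r) := by
  induction k using Nat.strong_induction_on with
  | _ k ih =>
    match k with
    | 0 => simp [H, T_zero]
    | 1 => simp [H, T_one]
    | (k+2) =>
      rw [H, ih (k+1) (by omega), ih k (by omega)]
      push_cast
      rw [T_add_two]
      simp [Polynomial.eval_mul, Polynomial.eval_sub]
      ring

lemma cos_nat_mul_pi (k : ℕ) : Real.cos (k * Real.pi) = (-1) ^ k := by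
  induction k with
  | zero => simp
  | succ n ih =>
    push_cast
    rw [add_mul, one_mul, Real.cos_add_pi, ih, pow_succ]
    ring

lemma H_cos (k : ℕ) {r : ℝ} (hr : r ∈ Set.Icc (-1:ℝ) 1) :
    H k r = 2 * Real.cos (k * Real.arccos (-r)) := by
  obtain ⟨h1, h2⟩ := hr
  rw [H_eq]
  congr 1
  have := Polynomial.Chebyshev.T_real_cos (Real.arccos (-r)) (k : ℤ)
  rw [Real.cos_arccos (by linarith) (by linarith)] at this
  rw [this]; push_cast; ring_nf

lemma H_abs_le (k : ℕ) {r : ℝ} (hr : r ∈ Set.Icc (-1:ℝ) 1) : |H k r| ≤ 2 := by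
  rw [H_cos k hr, abs_mul, abs_two]
  have := Real.abs_cos_le_one ((k:ℝ) * Real.arccos (-r))
  linarith

lemma H_one (k : ℕ) : H k 1 = 2 * (-1)^k := by
  rw [H_cos k ⟨by norm_num, le_refl 1⟩, Real.arccos_neg_one, cos_nat_mul_pi]

theorem abs_alternating_sum_H_le (p : ℕ) (hp : 1 ≤ p) :
    (∀ r ∈ Set.Icc (-1 : ℝ) 1,
        |(-1 : ℝ) ^ p + ∑ k ∈ Finset.Icc 1 p, (-1 : ℝ) ^ (p - k) * H k r| ≤ 2 * p + 1) ∧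
      |(-1 : ℝ) ^ p + ∑ k ∈ Finset.Icc 1 p, (-1 : ℝ) ^ (p - k) * H k 1| = 2 * p + 1 := by
  constructor
  · intro r hr
    calc |(-1 : ℝ) ^ p + ∑ k ∈ Finset.Icc 1 p, (-1 : ℝ) ^ (p - k) * H k r|
        ≤ |(-1 : ℝ) ^ p| + |∑ k ∈ Finset.Icc 1 p, (-1 : ℝ) ^ (p - k) * H k r| :=
          abs_add_le _ _
      _ ≤ 1 + ∑ k ∈ Finset.Icc 1 p, 2 := by
          gcongr
          · rw [abs_pow, abs_neg, abs_one, one_pow]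
          · refine (Finset.abs_sum_le_sum_abs _ _).trans (Finset.sum_le_sum ?_)
            intro k _
            rw [abs_mul, abs_pow, abs_neg, abs_one, one_pow, one_mul]
            exact H_abs_le k hr
      _ = 2 * p + 1 := by
          rw [Finset.sum_const, Nat.card_Icc]
          push_cast [Nat.add_sub_cancel]
          ring
  · have key : ∀ k ∈ Finset.Icc 1 p, (-1 : ℝ) ^ (p - k) * H k 1 = 2 * (-1)^p := by
      intro k hk
      simp only [Finset.mem_Icc] at hk
      rw [H_one]
      rw [show (2:ℝ) * (-1)^k = (-1)^k * 2 by ring, ← mul_assoc, ← pow_add,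
        Nat.sub_add_cancel hk.2]
      ring
    rw [Finset.sum_congr rfl key, Finset.sum_const, Nat.card_Icc, Nat.add_sub_cancel]
    have : ((-1:ℝ))^p + p • (2 * (-1)^p) = (2*p+1) * (-1)^p := by
      ring
    rw [this, abs_mul, abs_pow, abs_neg, abs_one, one_pow, mul_one,
      abs_of_nonneg (by positivity)]
end

section
/- For a depth-1 GM-QAOA state |ψ⟩ = U_M(β)U_P(γ)|F⟩, where |F⟩ = (1/√N)Σ_{f∈F}|f⟩ with N = |F|, U_P(γ)|f⟩ = e^{−iγ𝒞(f)}|f⟩, and U_M(β) = I − (1−e^{−iβ})|F⟩⟨F|, the amplitude of any basis state |f⟩ is ⟨f|ψ⟩ = (1/√N)[e^{−iγ𝒞(f)} − (1−e^{−iβ})·(1/N)·Σ_{f'∈F} e^{−iγ𝒞(f')}]. Consequently |⟨f|ψ⟩|² ≤ 9/N for all f ∈ F. -/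
open Complex in
/-- Depth-1 GM-QAOA amplitudes: starting from the uniform superposition over `F`,
apply the phase separator `U_P(γ)` then the Grover mixer `U_M(β)`; the resulting
amplitude of each basis state has a closed form, and its squared modulus is at
most `9/N`. -/
theorem gmqaoa_depth_one_amplitude {F : Type*} [Fintype F] [DecidableEq F] [Nonempty F]
    (𝒞 : F → ℝ) (γ β : ℝ)
    (N : ℕ) (hN : N = Fintype.card F)
    (uniform : F → ℂ) (huniform : uniform = fun _ => ((1 / Real.sqrt N : ℝ) : ℂ))
    (UP : Matrix F F ℂ)
    (hUP : UP = Matrix.diagonal fun f => Complex.exp (-(γ * 𝒞 f : ℝ) * Complex.I))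
    (UM : Matrix F F ℂ)
    (hUM : UM = 1 - (1 - Complex.exp (-(β : ℂ) * Complex.I)) •
      Matrix.vecMulVec uniform (star uniform))
    (ψ : F → ℂ) (hψ : ψ = (UM * UP).mulVec uniform) :
    ∀ f : F,
      ψ f = ((1 / Real.sqrt N : ℝ) : ℂ) *
          (Complex.exp (-(γ * 𝒞 f : ℝ) * Complex.I) -
            (1 - Complex.exp (-(β : ℂ) * Complex.I)) * ((1 : ℂ) / N) *
              ∑ f' : F, Complex.exp (-(γ * 𝒞 f' : ℝ) * Complex.I)) ∧
        ‖ψ f‖ ^ 2 ≤ 9 / N := by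
  have hNpos : 0 < N := by
    rw [hN]; exact Fintype.card_pos
  have hNR : (0:ℝ) < (N:ℝ) := by exact_mod_cast hNpos
  have hsq : ((1 / Real.sqrt N : ℝ) : ℂ) * ((1 / Real.sqrt N : ℝ) : ℂ) = (1 : ℂ) / N := by
    rw [← Complex.ofReal_mul, div_mul_div_comm, one_mul, Real.mul_self_sqrt hNR.le]
    push_cast; ring
  set u : ℂ := ((1 / Real.sqrt N : ℝ) : ℂ) with hu
  set c : ℂ := 1 - Complex.exp (-(β : ℂ) * Complex.I) with hc
  set e : F → ℂ := fun f => Complex.exp (-(γ * 𝒞 f : ℝ) * Complex.I) with he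
  intro f
  have hpsi : ψ f = u * (e f - c * ((1:ℂ)/N) * ∑ f', e f') := by
    have hUPv : UP.mulVec uniform = fun x => e x * u := by
      funext x
      rw [hUP, huniform]
      simp [Matrix.mulVec_diagonal]
    have h2 : ψ f = UM.mulVec (fun x => e x * u) f := by
      rw [hψ, ← Matrix.mulVec_mulVec, hUPv]
    rw [h2, hUM, huniform]
    simp only [Matrix.mulVec, dotProduct, Matrix.sub_apply, Matrix.one_apply,
      Matrix.smul_apply, Matrix.vecMulVec_apply, smul_eq_mul, Pi.star_apply,
      star_def, Complex.conj_ofReal]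
    have hstar : (starRingEnd ℂ) u = u := by rw [hu]; exact Complex.conj_ofReal _
    simp only [hstar]
    have key : ∀ x : F, ((if f = x then (1:ℂ) else 0) - c * (u * u)) * (e x * u)
        = (if f = x then e x * u else 0) - c * (u * u) * (e x * u) := by
      intro x; split <;> ring
    rw [Finset.sum_congr rfl (fun x _ => key x)]
    rw [Finset.sum_sub_distrib, Finset.sum_ite_eq, ← Finset.mul_sum, ← Finset.sum_mul, hsq]
    simp only [Finset.mem_univ, if_true]
    ring
  refine ⟨hpsi, ?_⟩
  have habs : ‖ψ f‖ ≤ 3 * (1 / Real.sqrt N) := by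
    rw [hpsi, norm_mul]
    have hue : ‖u‖ = 1 / Real.sqrt N := by
      rw [hu, Complex.norm_real, Real.norm_eq_abs]
      exact abs_of_nonneg (by positivity)
    rw [hue, mul_comm (3:ℝ)]
    apply mul_le_mul_of_nonneg_left _ (by positivity)
    have h1 : ∀ g : F, ‖e g‖ = 1 := by
      intro g
      rw [he]
      simp only
      rw [show (-(γ * 𝒞 g : ℝ) : ℂ) * Complex.I = ((-(γ * 𝒞 g) : ℝ) : ℂ) * Complex.I by
        push_cast; ring]
      exact Complex.norm_exp_ofReal_mul_I _
    have hsum : ‖∑ f', e f'‖ ≤ (N:ℝ) := by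
      calc ‖∑ f', e f'‖ ≤ ∑ f', ‖e f'‖ :=
            norm_sum_le _ _
        _ = (N:ℝ) := by simp [h1, hN]
    have hcabs : ‖c‖ ≤ 2 := by
      rw [hc]
      calc ‖(1 - Complex.exp (-(β:ℂ) * Complex.I))‖ ≤
            ‖(1:ℂ)‖ + ‖(Complex.exp (-(β:ℂ) * Complex.I))‖ :=
            norm_sub_le _ _
        _ ≤ 2 := by
            rw [show (-(β:ℂ)) * Complex.I = ((-β : ℝ) : ℂ) * Complex.I by push_cast; ring,
              Complex.norm_exp_ofReal_mul_I]
            norm_num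
    calc ‖e f - c * ((1:ℂ)/N) * ∑ f', e f'‖
        ≤ ‖e f‖ + ‖c * ((1:ℂ)/N) * ∑ f', e f'‖ :=
          norm_sub_le _ _
      _ ≤ 1 + 2 * (1/(N:ℝ)) * (N:ℝ) := by
          rw [h1, norm_mul, norm_mul]
          have habs1N : ‖(1:ℂ)/N‖ = 1/(N:ℝ) := by
            simp [map_div₀]
          rw [habs1N]
          gcongr
      _ ≤ 3 := by rw [mul_assoc, one_div, inv_mul_cancel₀ hNR.ne']; norm_num
  calc ‖ψ f‖ ^ 2 ≤ (3 * (1 / Real.sqrt N)) ^ 2 := by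
        apply pow_le_pow_left₀ (norm_nonneg _) habs
    _ = 9 * (1 / (N:ℝ)) := by
        rw [mul_pow, div_pow, one_pow, Real.sq_sqrt hNR.le]; norm_num
    _ = 9 / N := by ring
end
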